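/- Let n ≥ 2, let m be a permutation of {1, …, n}, and let p₁, …, pₙ and q₁, …, qₙ be elements of {+1, −1}. Let A be the n × n real matrix whose i-th row is pᵢ e_{m(i)} + q_{i+1} e_{m(i+1)} for 1 ≤ i ≤ n − 1 and whose n-th row is pₙ e_{m(n)} + q₁ e_{m(1)}. Then |det A| = |∏_{i=1}^{n} pᵢ + (−1)^{n−1} ∏_{i=1}^{n} qᵢ|. In particular, if A is invertible then |det A| = 2. -/

import Mathlib

/-!
Permuting the columns by `m` changes the determinant only by a sign and turns `A` into
the cyclic bidiagonal matrix with diagonal `pᵢ` and cyclic superdiagonal `q_{i+1}`. In the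
Leibniz expansion of such a matrix only the identity and the cyclic rotation (an `n`-cycle, of
sign `(-1)^(n-1)`) contribute, which gives `∏ pᵢ + (-1)^(n-1) ∏ qᵢ`. Both summands are `±1`, so
a nonzero sum is `±2`.
-/

def cyclicSucc {n : ℕ} (hn : 0 < n) (i : Fin n) : Fin n :=
  ⟨((i : ℕ) + 1) % n, Nat.mod_lt _ hn⟩

lemma cyclicSucc_eq_add_one {k : ℕ} (h : 0 < k + 2) (i : Fin (k + 2)) :
    cyclicSucc h i = i + 1 := by
  ext
  simp [cyclicSucc, Fin.val_add]

open Fin.NatCast in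
lemma Fin.cyclic_induction {k : ℕ} {P : Fin (k + 2) → Prop} {i₀ : Fin (k + 2)} (h₀ : P i₀)
    (hstep : ∀ i, P i → P (i + 1)) (j : Fin (k + 2)) : P j := by
  have hreach : ∀ d : ℕ, P (i₀ + (d : Fin (k + 2))) := by
    intro d
    induction d with
    | zero => simpa using h₀
    | succ d ih => simpa [add_assoc] using hstep _ ih
  simpa using hreach (j - i₀).val

lemma Equiv.Perm.eq_one_or_eq_finRotate_of_forall {k : ℕ} (σ : Equiv.Perm (Fin (k + 2)))
    (h : ∀ i, σ i = i ∨ σ i = i + 1) : σ = 1 ∨ σ = finRotate (k + 2) := by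
  by_cases hfix : ∀ i, σ i = i
  · exact Or.inl (Equiv.ext hfix)
  obtain ⟨i₀, hi₀⟩ := not_forall.mp hfix
  refine Or.inr (Equiv.ext fun j => ?_)
  rw [finRotate_apply]
  refine Fin.cyclic_induction (P := fun i => σ i = i + 1) ((h i₀).resolve_left hi₀)
    (fun i hi => ?_) j
  -- `σ (i + 1) = i + 1 = σ i` would contradict injectivity.
  refine (h (i + 1)).resolve_left fun hfix => ?_
  have : i + 1 = i := σ.injective (hfix.trans hi.symm)
  simp at this

lemma Matrix.det_eq_of_cyclic_bidiagonal {R : Type*} [CommRing R] {k : ℕ}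
    (M : Matrix (Fin (k + 2)) (Fin (k + 2)) R)
    (hM : ∀ i j, j ≠ i → j ≠ i + 1 → M i j = 0) :
    M.det = ∏ i, M i i + (-1) ^ (k + 1) * ∏ i, M i (i + 1) := by
  have hrot : (1 : Equiv.Perm (Fin (k + 2))) ≠ finRotate (k + 2) := by
    intro h
    have := congrArg (· 0) h
    simp [finRotate_apply] at this
  rw [← M.det_transpose, Matrix.det_apply', Fintype.sum_eq_add _ _ hrot]
  · simp [finRotate_apply, sign_finRotate]
  · rintro σ ⟨hσ₁, hσ₂⟩
    obtain ⟨i, hi, hi'⟩ : ∃ i, σ i ≠ i ∧ σ i ≠ i + 1 := by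
      by_contra! hall
      exact (σ.eq_one_or_eq_finRotate_of_forall fun i =>
        (em (σ i = i)).imp_right (hall i)).elim hσ₁ hσ₂
    rw [Finset.prod_eq_zero (Finset.mem_univ i) (hM i (σ i) hi hi'), mul_zero]

lemma abs_add_eq_two_of_abs_eq_one {R : Type*} [CommRing R] [LinearOrder R]
    [IsStrictOrderedRing R] {a b : R} (ha : |a| = 1) (hb : |b| = 1) (hab : a + b ≠ 0) :
    |a + b| = 2 := by
  rcases abs_eq_abs.mp (ha.trans hb.symm) with h | h
  · rw [← h, ← two_mul, abs_mul, ha, mul_one, abs_two]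
  · exact absurd (by rw [h]; ring) hab

lemma abs_prod_eq_one {R ι : Type*} [CommRing R] [LinearOrder R] [IsStrictOrderedRing R]
    [Fintype ι] {p : ι → R} (hp : ∀ i, p i = 1 ∨ p i = -1) :
    |∏ i, p i| = 1 := by
  rw [Finset.abs_prod]
  exact Finset.prod_eq_one fun i _ => by rcases hp i with h | h <;> simp [h]

/-- determinant of a loop: if the `i`-th row of `A` is
`pᵢ e_{m(i)} + q_{i+1} e_{m(i+1)}` (indices cyclic mod `n`, `m` a permutation,
`pᵢ, qᵢ ∈ {±1}`), then `|det A| = |∏ pᵢ + (−1)^{n−1} ∏ qᵢ|`; in particular if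
`A` is invertible then `|det A| = 2`. -/
theorem loop_matrix_abs_det (n : ℕ) (hn : 2 ≤ n) (m : Equiv.Perm (Fin n))
    (p q : Fin n → ℝ)
    (hp : ∀ i, p i = 1 ∨ p i = -1) (hq : ∀ i, q i = 1 ∨ q i = -1)
    (A : Matrix (Fin n) (Fin n) ℝ)
    (hA : ∀ i, A i = p i • (Pi.single (m i) 1 : Fin n → ℝ)
      + q (cyclicSucc (by omega) i) •
        (Pi.single (m (cyclicSucc (by omega) i)) 1 : Fin n → ℝ)) :
    |A.det| = |(∏ i, p i) + (-1) ^ (n - 1) * ∏ i, q i| ∧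
      (A.det ≠ 0 → |A.det| = 2) := by
  obtain ⟨k, rfl⟩ : ∃ k, n = k + 2 := ⟨n - 2, by omega⟩
  set C := A.submatrix (Equiv.refl _) m
  have hC : ∀ i j, C i j = (if j = i then p i else 0) + (if j = i + 1 then q (i + 1) else 0) := by
    intro i j
    simp [C, hA, cyclicSucc_eq_add_one, Pi.single_apply, m.injective.eq_iff]
  have hdetC : C.det = ∏ i, p i + (-1) ^ (k + 1) * ∏ i, q i := by
    rw [C.det_eq_of_cyclic_bidiagonal fun i j h h' => by simp [hC, h, h']]
    have hdiag : ∀ i, C i i = p i := by simp [hC]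
    have hsuper : ∀ i, C i (i + 1) = q (i + 1) := by simp [hC]
    simp only [hdiag, hsuper, Fintype.prod_equiv (Equiv.addRight 1) (fun i => q (i + 1)) q
      fun _ => rfl]
  have habs : |A.det| = |∏ i, p i + (-1) ^ (k + 2 - 1) * ∏ i, q i| := by
    rw [← A.abs_det_submatrix_equiv_equiv (Equiv.refl _) m, hdetC]
    rfl
  refine ⟨habs, fun hdet => ?_⟩
  rw [habs]
  refine abs_add_eq_two_of_abs_eq_one (abs_prod_eq_one hp) ?_ ?_
  · rw [abs_mul, abs_pow, abs_neg, abs_one, one_pow, one_mul, abs_prod_eq_one hq]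
  · rwa [← abs_ne_zero, ← habs, abs_ne_zero]
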